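/- arXiv:2310.20400 — 3 statements merged into one kernel-verified Lean document; each statement's English description precedes it below -/
import Mathlib

section
/- For every n with 3/2 < n < 3, the interval ((-9+4n-√(-27+36n-8n²))/(2n), 0) ∩ ((n-3)/n - 1/√(2n), (n-3)/n + 1/√(2n)) is nonempty; in particular the coercivity range of the linearized thin-film operator for 3/2 < n < 3 is a nonempty open interval. -/
open Set

/-- For `3/2 < n < 3`, the coercivity range
`(γ₂, 0) ∩ ((n-3)/n - 1/√(2n), (n-3)/n + 1/√(2n))` is nonempty. -/
theorem coercivity_range_nonempty (n : ℝ) (hn1 : 3/2 < n) (hn2 : n < 3) :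
    (Ioo ((-9 + 4*n - Real.sqrt (-27 + 36*n - 8*n^2))/(2*n)) (0:ℝ) ∩
      Ioo ((n-3)/n - 1/Real.sqrt (2*n)) ((n-3)/n + 1/Real.sqrt (2*n))).Nonempty := by
  have hn0 : (0:ℝ) < n := by linarith
  have hD : (0:ℝ) ≤ -27 + 36*n - 8*n^2 := by nlinarith [sq_nonneg (n - 3/2), sq_nonneg (3 - n)]
  have hsqrt : 2*n - 3 < Real.sqrt (-27 + 36*n - 8*n^2) := by
    rw [show (2*n - 3 : ℝ) = Real.sqrt ((2*n-3)^2) from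
      (Real.sqrt_sq (by linarith)).symm]
    apply Real.sqrt_lt_sqrt (by positivity)
    nlinarith
  have hpos : (0:ℝ) < 1/Real.sqrt (2*n) := by
    have : (0:ℝ) < Real.sqrt (2*n) := Real.sqrt_pos.mpr (by linarith)
    positivity
  refine ⟨(n-3)/n, ⟨?_, ?_⟩, ?_, ?_⟩
  · rw [div_lt_div_iff₀ (by linarith) hn0]
    nlinarith
  · exact div_neg_of_neg_of_pos (by linarith) hn0
  · linarith
  · linarith
end

section
/- Let k ∈ ℕ, let c₀, ..., c_k be positive reals, and let α ∈ ℝ. If for each j ∈ {0,...,k} it holds that c_j > -Σ_{j < m ≤ k} c_m · C(m, 2(m-j)) · (-1)^(m-j) · (2α-1)^(2(m-j)), then the real polynomial 𝔭(ξ) := Re Σ_{j=0}^k c_j (-iξ)^j (iξ + 2α - 1)^j = Σ_{j=0}^k d_j ξ^(2j), where d_j = c_j + Σ_{j < m ≤ k} c_m · C(m, 2(m-j)) · (-1)^(m-j) · (2α-1)^(2(m-j)), has all coefficients d_j > 0 and hence is strictly positive for all real ξ; consequently Σ_{j=0}^k c_j (-iξ)^j (iξ + 2α - 1)^j ≠ 0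 for all ξ ∈ ℝ. -/
/-!
With `β = 2α - 1` we have `(-iξ)(iξ + β) = ξ² - βξ i`, so the `j`-th summand is
`c_j (ξ² - βξ i)^j`. In the binomial expansion of its real part only the even powers of `βξ i`
survive, and collecting the powers of `ξ` gives the even polynomial `∑ d_p ξ^(2p)`. The hypothesis
says exactly that every `d_p` is positive, so this polynomial is at least `d_0 > 0` on the real
line.
-/

open Finset Complex

lemma re_I_pow_two_mul (r : ℕ) : (I ^ (2 * r)).re = (-1) ^ r := by
  rw [pow_mul, I_sq, ← ofReal_one, ← ofReal_neg, ← ofReal_pow, ofReal_re]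

lemma re_I_pow_two_mul_add_one (r : ℕ) : (I ^ (2 * r + 1)).re = 0 := by
  rw [pow_succ, pow_mul, I_sq, ← ofReal_one, ← ofReal_neg, ← ofReal_pow, re_ofReal_mul, I_re,
    mul_zero]

theorem re_add_mul_I_pow (x y : ℝ) (n : ℕ) :
    ((x + y * I) ^ n).re =
      ∑ r ∈ range (n + 1), (n.choose (2 * r) : ℝ) * (-1) ^ r * x ^ (n - 2 * r) * y ^ (2 * r) := by
  have hterm : ∀ q, (((y : ℂ) * I) ^ q * (x : ℂ) ^ (n - q) * n.choose q).re =
      n.choose q * x ^ (n - q) * y ^ q * (I ^ q).re := by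
    intro q
    have : ((y : ℂ) * I) ^ q * (x : ℂ) ^ (n - q) * n.choose q =
        ((n.choose q * x ^ (n - q) * y ^ q : ℝ) : ℂ) * I ^ q := by
      push_cast
      ring
    rw [this, re_ofReal_mul]
  rw [add_comm, add_pow, re_sum]
  simp_rw [hterm]
  symm
  refine sum_bij_ne_zero (fun r _ _ => 2 * r) ?_ ?_ ?_ ?_
  · intro r _ hr
    have : 2 * r ≤ n := by
      by_contra h
      simp [Nat.choose_eq_zero_of_lt (not_le.mp h)] at hr
    simpa [Nat.lt_succ_iff] using this
  · intro a _ _ b _ _ h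
    omega
  · intro q hq hq0
    obtain ⟨r, rfl | rfl⟩ := Nat.even_or_odd' q
    · refine ⟨r, ?_, ?_, rfl⟩
      · simp at hq ⊢; omega
      · convert hq0 using 1
        rw [re_I_pow_two_mul]
        ring
    · simp [re_I_pow_two_mul_add_one] at hq0
  · intro r _ _
    rw [re_I_pow_two_mul]
    ring

theorem re_sq_sub_mul_I_pow (β ξ : ℝ) (j : ℕ) :
    (((ξ : ℂ) ^ 2 - β * ξ * I) ^ j).re =
      ∑ p ∈ range (j + 1),
        (j.choose (2 * (j - p)) : ℝ) * (-1) ^ (j - p) * β ^ (2 * (j - p)) * ξ ^ (2 * p) := by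
  have hw : (ξ : ℂ) ^ 2 - β * ξ * I = ((ξ ^ 2 : ℝ) : ℂ) + ((-(β * ξ) : ℝ) : ℂ) * I := by
    push_cast
    ring
  rw [hw, re_add_mul_I_pow, ← sum_range_reflect]
  refine sum_congr rfl fun p hp => ?_
  rw [mem_range] at hp
  rw [show j + 1 - 1 - p = j - p by omega]
  rcases le_or_gt (2 * (j - p)) j with h | h
  · have hξ : (ξ ^ 2) ^ (j - 2 * (j - p)) * ξ ^ (2 * (j - p)) = ξ ^ (2 * p) := by
      rw [← pow_mul, ← pow_add]
      congr 1
      omega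
    rw [(even_two_mul _).neg_pow, mul_pow, ← hξ]
    ring
  · simp [Nat.choose_eq_zero_of_lt h]

theorem re_sum_mul_sq_sub_mul_I_pow (c : ℕ → ℝ) (β ξ : ℝ) (k : ℕ) :
    (∑ j ∈ range (k + 1), (c j : ℂ) * ((ξ : ℂ) ^ 2 - β * ξ * I) ^ j).re =
      ∑ p ∈ range (k + 1), (c p + ∑ m ∈ Ioc p k,
        c m * (m.choose (2 * (m - p)) : ℝ) * (-1) ^ (m - p) * β ^ (2 * (m - p))) * ξ ^ (2 * p) := by
  simp_rw [re_sum, re_ofReal_mul, re_sq_sub_mul_I_pow, mul_sum]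
  rw [sum_comm' (t' := range (k + 1)) (s' := fun p => Icc p k) (by intro j p; simp; omega)]
  refine sum_congr rfl fun p hp => ?_
  rw [mem_range] at hp
  rw [Icc_eq_cons_Ioc (by omega), sum_cons, add_mul, sum_mul]
  simp only [Nat.sub_self, Nat.choose_zero_right, mul_zero, pow_zero]
  congr 1
  · ring
  · exact sum_congr rfl fun m _ => by ring

theorem sum_range_mul_pow_two_mul_pos {R : Type*} [Ring R] [LinearOrder R] [IsStrictOrderedRing R]
    {d : ℕ → R} {k : ℕ} (hd : ∀ j ≤ k, 0 < d j) (x : R) :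
    0 < ∑ j ∈ range (k + 1), d j * x ^ (2 * j) := by
  rw [sum_range_succ']
  refine add_pos_of_nonneg_of_pos (sum_nonneg fun j hj => ?_) (by simpa using hd 0 k.zero_le)
  rw [mem_range] at hj
  exact mul_nonneg (hd (j + 1) hj).le ((even_two_mul _).pow_nonneg x)

theorem polynomial_no_real_zeros_general (k : ℕ) (c : ℕ → ℝ) (α : ℝ)
    (hcond : ∀ j ≤ k, c j >
      -∑ m ∈ Finset.Ioc j k,
        c m * (Nat.choose m (2*(m-j)) : ℝ) * (-1:ℝ)^(m-j) * (2*α-1)^(2*(m-j))) :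
    let d : ℕ → ℝ := fun j => c j +
      ∑ m ∈ Finset.Ioc j k,
        c m * (Nat.choose m (2*(m-j)) : ℝ) * (-1:ℝ)^(m-j) * (2*α-1)^(2*(m-j))
    (∀ j ≤ k, 0 < d j) ∧
    (∀ ξ : ℝ, (∑ j ∈ Finset.range (k+1),
        (c j : ℂ) * (-Complex.I * ξ)^j * (Complex.I * ξ + 2*α - 1)^j).re
      = ∑ j ∈ Finset.range (k+1), d j * ξ^(2*j)) ∧
    (∀ ξ : ℝ, 0 < ∑ j ∈ Finset.range (k+1), d j * ξ^(2*j)) ∧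
    (∀ ξ : ℝ, ∑ j ∈ Finset.range (k+1),
        (c j : ℂ) * (-Complex.I * ξ)^j * (Complex.I * ξ + 2*α - 1)^j ≠ 0) := by
  intro d
  have hd : ∀ j ≤ k, 0 < d j := fun j hj => by linarith [hcond j hj]
  have hre : ∀ ξ : ℝ, (∑ j ∈ range (k + 1),
      (c j : ℂ) * (-I * ξ) ^ j * (I * ξ + 2 * α - 1) ^ j).re =
        ∑ j ∈ range (k + 1), d j * ξ ^ (2 * j) := by
    intro ξ
    have hbase :
        (-I * ξ) * (I * ξ + 2 * α - 1) = (ξ : ℂ) ^ 2 - ((2 * α - 1 : ℝ) : ℂ) * ξ * I := by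
      push_cast
      linear_combination (-(ξ : ℂ) ^ 2) * I_sq
    simp_rw [mul_assoc, ← mul_pow, hbase]
    exact re_sum_mul_sq_sub_mul_I_pow c (2 * α - 1) ξ k
  refine ⟨hd, hre, sum_range_mul_pow_two_mul_pos hd, fun ξ h => ?_⟩
  have hpos := sum_range_mul_pow_two_mul_pos hd ξ
  rw [← hre ξ, h, zero_re] at hpos
  exact hpos.false

/-- If `c₀,…,c_k > 0` satisfy the stated lower bounds, then the coefficients
`d_j` of the even polynomial `Re ∑ c_j (-iξ)^j (iξ+2α-1)^j = ∑ d_j ξ^(2j)`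
are positive, the polynomial is strictly positive, and hence the complex sum
never vanishes for real `ξ`. -/
theorem polynomial_no_real_zeros (k : ℕ) (c : ℕ → ℝ) (α : ℝ)
    (hc : ∀ j ≤ k, 0 < c j)
    (hcond : ∀ j ≤ k, c j >
      -∑ m ∈ Finset.Ioc j k,
        c m * (Nat.choose m (2*(m-j)) : ℝ) * (-1:ℝ)^(m-j) * (2*α-1)^(2*(m-j))) :
    let d : ℕ → ℝ := fun j => c j +
      ∑ m ∈ Finset.Ioc j k,
        c m * (Nat.choose m (2*(m-j)) : ℝ) * (-1:ℝ)^(m-j) * (2*α-1)^(2*(m-j))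
    (∀ j ≤ k, 0 < d j) ∧
    (∀ ξ : ℝ, (∑ j ∈ Finset.range (k+1),
        (c j : ℂ) * (-Complex.I * ξ)^j * (Complex.I * ξ + 2*α - 1)^j).re
      = ∑ j ∈ Finset.range (k+1), d j * ξ^(2*j)) ∧
    (∀ ξ : ℝ, 0 < ∑ j ∈ Finset.range (k+1), d j * ξ^(2*j)) ∧
    (∀ ξ : ℝ, ∑ j ∈ Finset.range (k+1),
        (c j : ℂ) * (-Complex.I * ξ)^j * (Complex.I * ξ + 2*α - 1)^j ≠ 0) :=
  polynomial_no_real_zeros_general k c α hcond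
end

section
/- For every n ∈ (1, 3/2) ∪ (3/2, 3), the condition 1.8384... = (3/17)(15-√21) < n < (3/11)(7+√5) = 2.5189... implies both that β > 1/2 and that -1/2 lies in the coercivity interval; more precisely, for n ∈ (3/2, 3), β = (4n-9+√(-27+36n-8n²))/(2n) > 1/2 holds if and only if n > (3/17)(15-√21). -/
/-- For `n ∈ (3/2, 3)`, the largest root
`β = (4n-9+√(-27+36n-8n²))/(2n)` satisfies `β > 1/2` if and only if
`n > (3/17)(15 - √21)`. -/
theorem beta_gt_half_iff (n : ℝ) (hn1 : 3/2 < n) (hn2 : n < 3) :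
    let β : ℝ := (4*n - 9 + Real.sqrt (-27 + 36*n - 8*n^2))/(2*n)
    β > 1/2 ↔ n > (3/17) * (15 - Real.sqrt 21) := by
  intro β
  have hD : (0:ℝ) ≤ -27 + 36*n - 8*n^2 := by nlinarith
  set s := Real.sqrt (-27 + 36*n - 8*n^2) with hs
  have hs0 : 0 ≤ s := Real.sqrt_nonneg _
  have hs2 : s^2 = -27 + 36*n - 8*n^2 := Real.sq_sqrt hD
  set t := Real.sqrt 21 with ht
  have ht0 : 0 ≤ t := Real.sqrt_nonneg _
  have ht2 : t^2 = 21 := Real.sq_sqrt (by norm_num)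
  have ht4 : 4 < t := by
    nlinarith [sq_nonneg (t - 4)]
  have h2n : (0:ℝ) < 2*n := by linarith
  have hb : β > 1/2 ↔ s > 9 - 3*n := by
    constructor
    · intro h
      have := (lt_div_iff₀ h2n).mp h
      linarith
    · intro h
      have : 1/2 * (2*n) < 4*n - 9 + s := by linarith
      exact (lt_div_iff₀ h2n).mpr this
  rw [hb]
  constructor
  · intro h
    have hq : 17*n^2 - 90*n + 108 < 0 := by nlinarith
    nlinarith [sq_nonneg (17*n - 45 + 3*t)]
  · intro h
    have hq : 17*n^2 - 90*n + 108 < 0 := by nlinarith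
    nlinarith [sq_nonneg (s - (9 - 3*n))]
end
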